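/- Let f : ℝ → ℝ be convex and bounded on compact sets, and for ε > 0 let ρ_ε be a smooth nonnegative mollifier supported in [0, ε] with ∫ρ_ε = 1. Then for every e ∈ ℝ, the derivative of the mollification f_ε := f * ρ_ε satisfies f_ε'(e) → ∂₊f(e) as ε → 0⁺, where ∂₊f is the right derivative of f. -/

import Mathlib

open MeasureTheory Set Filter Topology

private lemma molly_integrable (g ρε : ℝ → ℝ) (hg : Continuous g) (hρc : Continuous ρε)
    {ε : ℝ} (hsupp : ∀ x, x ∉ Set.Icc 0 ε → ρε x = 0) :
    Integrable (fun x => g x * ρε x) := by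
  apply Continuous.integrable_of_hasCompactSupport (hg.mul hρc)
  apply HasCompactSupport.intro (isCompact_Icc (a := (0:ℝ)) (b := ε))
  intro x hx; simp [hsupp x hx]

private lemma molly_hasDeriv (f : ℝ → ℝ) (hf : Continuous f) {ε : ℝ} (ρε : ℝ → ℝ)
    (hsm : ContDiff ℝ (⊤ : ℕ∞) ρε) (hsupp : ∀ x, x ∉ Set.Icc 0 ε → ρε x = 0) (e : ℝ) :
    ∃ D, HasDerivAt (fun u => ∫ x, f (u + x) * ρε x) D e := by
  set g : ℝ → ℝ := fun t => ρε (-t) with hg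
  have hgsm : ContDiff ℝ 1 g := (hsm.comp contDiff_neg).of_le (by simp)
  have hgsupp : HasCompactSupport g := by
    apply HasCompactSupport.intro (isCompact_Icc (a := -ε) (b := 0))
    intro t ht
    apply hsupp
    simp only [mem_Icc, not_and_or, not_le] at ht ⊢
    rcases ht with h | h
    · right; linarith
    · left; linarith
  have hloc : LocallyIntegrable f volume := hf.locallyIntegrable
  have hconv := HasCompactSupport.hasDerivAt_convolution_right
    (ContinuousLinearMap.mul ℝ ℝ) hloc hgsupp hgsm e
  refine ⟨_, hconv.congr_of_eventuallyEq ?_⟩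
  filter_upwards with u
  show _ = convolution f g (ContinuousLinearMap.mul ℝ ℝ) volume u
  rw [MeasureTheory.convolution,
    ← MeasureTheory.integral_add_right_eq_self
      (fun t => (ContinuousLinearMap.mul ℝ ℝ) (f t) (g (u - t))) u]
  congr 1 with x
  simp [hg, add_comm, sub_eq_add_neg]

private lemma molly_convex (f ρε : ℝ → ℝ) (hconv : ConvexOn ℝ Set.univ f) (hf : Continuous f)
    (hρc : Continuous ρε) (hρ0 : ∀ x, 0 ≤ ρε x) {ε : ℝ}
    (hsupp : ∀ x, x ∉ Set.Icc 0 ε → ρε x = 0) :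
    ConvexOn ℝ Set.univ (fun u => ∫ x, f (u + x) * ρε x) := by
  have hI : ∀ u : ℝ, Integrable (fun x => f (u + x) * ρε x) := fun u =>
    molly_integrable _ _ (hf.comp (continuous_const.add continuous_id)) hρc hsupp
  refine ⟨convex_univ, fun u _ v _ a b ha hb hab => ?_⟩
  simp only [smul_eq_mul]
  calc ∫ x, f (a * u + b * v + x) * ρε x
      ≤ ∫ x, (a * (f (u + x) * ρε x) + b * (f (v + x) * ρε x)) := by
        apply integral_mono (by
          have := hI (a * u + b * v)
          exact this) (((hI u).const_mul a).add ((hI v).const_mul b))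
        intro x
        have harg : a * u + b * v + x = a * (u + x) + b * (v + x) := by
          linear_combination (-x) * hab
        have h1 : f (a * u + b * v + x) ≤ a * f (u + x) + b * f (v + x) := by
          rw [harg]
          simpa using hconv.2 (Set.mem_univ (u + x)) (Set.mem_univ (v + x)) ha hb hab
        calc f (a * u + b * v + x) * ρε x
            ≤ (a * f (u + x) + b * f (v + x)) * ρε x :=
              mul_le_mul_of_nonneg_right h1 (hρ0 x)
          _ = a * (f (u + x) * ρε x) + b * (f (v + x) * ρε x) := by ring
    _ = a * (∫ x, f (u + x) * ρε x) + b * (∫ x, f (v + x) * ρε x) := by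
        rw [integral_add ((hI u).const_mul a) ((hI v).const_mul b),
          MeasureTheory.integral_const_mul, MeasureTheory.integral_const_mul]

private lemma molly_slope_mono_left {f : ℝ → ℝ} (hconv : ConvexOn ℝ Set.univ f)
    {p a b : ℝ} (hpa : p ≤ a) (hab : a < b) (hpb : p < b) :
    slope f p b ≤ slope f a b := by
  rw [slope_comm f p b, slope_comm f a b]
  have := hconv.secant_mono (Set.mem_univ b) (Set.mem_univ p) (Set.mem_univ a)
    (ne_of_lt hpb) (ne_of_lt hab) hpa
  simpa [slope_def_field] using this

private lemma molly_slope_mono_right {f : ℝ → ℝ} (hconv : ConvexOn ℝ Set.univ f)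
    {a b c : ℝ} (hab : a < b) (hbc : b ≤ c) (hac : a < c) :
    slope f a b ≤ slope f a c := by
  have := hconv.secant_mono (Set.mem_univ a) (Set.mem_univ b) (Set.mem_univ c)
    (ne_of_gt hab) (ne_of_gt hac) hbc
  simpa [slope_def_field] using this

private lemma molly_supp_line {f : ℝ → ℝ} (hconv : ConvexOn ℝ Set.univ f) {e dp : ℝ}
    (hdp : HasDerivWithinAt f dp (Set.Ioi e) e) {x : ℝ} (hx : 0 ≤ x) :
    f e + dp * x ≤ f (e + x) := by
  rcases eq_or_lt_of_le hx with h | hx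
  · simp [← h]
  · have hs := hconv.le_slope_of_hasDerivWithinAt_Ioi (Set.mem_univ e)
      (Set.mem_univ (e + x)) (by linarith) hdp
    rw [slope_def_field] at hs
    have h1 : e + x - e = x := by ring
    rw [h1, le_div_iff₀ hx] at hs
    linarith

theorem stmt14 (f : ℝ → ℝ) (hconv : ConvexOn ℝ Set.univ f)
    (hbdd : ∀ r > (0 : ℝ), ∃ M : ℝ, ∀ x : ℝ, |x| ≤ r → |f x| ≤ M)
    (ρ : ℝ → ℝ → ℝ)
    (hρ : ∀ ε > (0 : ℝ), ContDiff ℝ (⊤ : ℕ∞) (ρ ε) ∧ (∀ x, 0 ≤ ρ ε x) ∧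
      (∀ x, x ∉ Set.Icc 0 ε → ρ ε x = 0) ∧ (∫ x, ρ ε x) = 1)
    (e dp : ℝ)
    (hdp : HasDerivWithinAt f dp (Set.Ioi e) e) :
    Filter.Tendsto (fun ε => deriv (fun u => ∫ x, f (u + x) * ρ ε x) e)
      (nhdsWithin 0 (Set.Ioi 0)) (nhds dp) := by
  have hf : Continuous f := by
    rw [← continuousOn_univ]
    exact hconv.continuousOn isOpen_univ
  -- supporting line: f (e + x) ≥ f e + dp * x for x ≥ 0
  have hline := fun {x : ℝ} (hx : 0 ≤ x) => molly_supp_line hconv hdp hx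
  -- lower bound : dp ≤ D ε for all ε > 0
  have hlow : ∀ ε ∈ Set.Ioi (0:ℝ), dp ≤ deriv (fun u => ∫ x, f (u + x) * ρ ε x) e := by
    intro ε hε
    obtain ⟨hsm, hρ0, hsupp, hρ1⟩ := hρ ε hε
    have hρc : Continuous (ρ ε) := hsm.continuous
    set F : ℝ → ℝ := fun u => ∫ x, f (u + x) * ρ ε x with hF
    have hI : ∀ u : ℝ, Integrable (fun x => f (u + x) * ρ ε x) := fun u =>
      molly_integrable _ _ (hf.comp (continuous_const.add continuous_id)) hρc hsupp
    have hρint : Integrable (ρ ε) := by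
      have := molly_integrable (fun _ => (1:ℝ)) (ρ ε) continuous_const hρc hsupp
      simpa using this
    obtain ⟨D, hD⟩ := molly_hasDeriv f hf (ρ ε) hsm hsupp e
    have hDval : deriv F e = D := hD.deriv
    rw [hDval]
    have hFconv : ConvexOn ℝ Set.univ F := molly_convex f (ρ ε) hconv hf hρc hρ0 hsupp
    -- sequence δ n = 1/(n+1)
    set δf : ℕ → ℝ := fun n => 1 / (n + 1 : ℝ) with hδf
    have hδpos : ∀ n, 0 < δf n := fun n => by positivity
    have hδle1 : ∀ n, δf n ≤ 1 := fun n => by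
      rw [hδf]
      rw [div_le_one (by positivity)]
      simp
    set K : ℝ := slope f (e - 2) (e - 1) with hK
    set K' : ℝ := min K dp with hK'
    set I : ℕ → ℝ := fun n => ∫ x, (Set.Iio (δf n)).indicator (ρ ε) x with hI2
    -- step 1 : slope bound
    have hstep1 : ∀ n, dp + (K' - dp) * I n ≤ D := by
      intro n
      have hslope : dp + (K' - dp) * I n ≤ slope F (e - δf n) e := by
        have hptwise : ∀ x : ℝ,
            δf n * dp * ρ ε x + δf n * (K' - dp) * (Set.Iio (δf n)).indicator (ρ ε) x ≤
              f (e + x) * ρ ε x - f (e - δf n + x) * ρ ε x := by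
          intro x
          by_cases hx : x ∈ Set.Icc 0 ε
          · obtain ⟨hx0, hxε⟩ := hx
            by_cases hxδ : x < δf n
            · -- small x : use K'
              rw [Set.indicator_of_mem (by exact hxδ)]
              have ha1 : e - 2 < e - δf n + x := by
                have := hδle1 n; linarith
              have hab : e - δf n + x < e + x := by have := hδpos n; linarith
              have hKle : K ≤ slope f (e - δf n + x) (e + x) := by
                have h1 : slope f (e - 2) (e + x) ≤ slope f (e - δf n + x) (e + x) :=
                  molly_slope_mono_left hconv (le_of_lt ha1) hab (by linarith)
                have h2 : slope f (e - 2) (e - 1) ≤ slope f (e - 2) (e + x) := by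
                  apply molly_slope_mono_right hconv (by linarith) (by
                    have := hδle1 n; linarith) (by linarith)
                linarith [h1, h2]
              have hdiff : δf n * K' ≤ f (e + x) - f (e - δf n + x) := by
                have hsl : K' ≤ slope f (e - δf n + x) (e + x) :=
                  le_trans (min_le_left _ _) hKle
                rw [slope_def_field] at hsl
                have hd : e + x - (e - δf n + x) = δf n := by ring
                rw [hd, le_div_iff₀ (hδpos n)] at hsl
                linarith
              have := mul_le_mul_of_nonneg_right hdiff (hρ0 x)
              nlinarith [hρ0 x, this]
            · -- x ≥ δf n : slope ≥ dp
              rw [Set.indicator_of_notMem (by simpa using not_lt.mp hxδ)]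
              push_neg at hxδ
              have hab : e - δf n + x < e + x := by have := hδpos n; linarith
              have hea : e ≤ e - δf n + x := by linarith
              have hdp2 : dp ≤ slope f (e - δf n + x) (e + x) := by
                have h1 : slope f e (e + x) ≤ slope f (e - δf n + x) (e + x) :=
                  molly_slope_mono_left hconv hea hab (by
                    have := hδpos n; linarith)
                have h2 : dp ≤ slope f e (e + x) :=
                  hconv.le_slope_of_hasDerivWithinAt_Ioi (Set.mem_univ e)
                    (Set.mem_univ (e + x)) (by have := hδpos n; linarith) hdp
                linarith
              have hdiff : δf n * dp ≤ f (e + x) - f (e - δf n + x) := by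
                rw [slope_def_field] at hdp2
                have hd : e + x - (e - δf n + x) = δf n := by ring
                rw [hd, le_div_iff₀ (hδpos n)] at hdp2
                linarith
              have := mul_le_mul_of_nonneg_right hdiff (hρ0 x)
              nlinarith [this]
          · have hρx : ρ ε x = 0 := hsupp x hx
            have hind : (Set.Iio (δf n)).indicator (ρ ε) x = 0 := by
              by_cases h : x ∈ Set.Iio (δf n)
              · rw [Set.indicator_of_mem h]; exact hρx
              · exact Set.indicator_of_notMem h _
            rw [hρx, hind]; simp
        have hintineq : δf n * dp + δf n * (K' - dp) * I n ≤ F e - F (e - δf n) := by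
          have hleft : Integrable (fun x => δf n * dp * ρ ε x +
              δf n * (K' - dp) * (Set.Iio (δf n)).indicator (ρ ε) x) :=
            (hρint.const_mul _).add ((hρint.indicator measurableSet_Iio).const_mul _)
          have hright : Integrable (fun x => f (e + x) * ρ ε x - f (e - δf n + x) * ρ ε x) :=
            (hI e).sub (hI (e - δf n))
          have := integral_mono hleft hright hptwise
          rw [integral_sub (hI e) (hI (e - δf n))] at this
          rw [integral_add (hρint.const_mul _) ((hρint.indicator measurableSet_Iio).const_mul _),
            MeasureTheory.integral_const_mul, MeasureTheory.integral_const_mul, hρ1] at this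
          simpa [hI2] using this
        rw [slope_def_field]
        have hd : e - (e - δf n) = δf n := by ring
        rw [hd, le_div_iff₀ (hδpos n)]
        calc (dp + (K' - dp) * I n) * δf n
            = δf n * dp + δf n * (K' - dp) * I n := by ring
          _ ≤ F e - F (e - δf n) := hintineq
      have hsD : slope F (e - δf n) e ≤ D :=
        hFconv.slope_le_of_hasDerivAt (Set.mem_univ _) (Set.mem_univ _)
          (by have := hδpos n; linarith) hD
      linarith
    -- step 2 : I n → 0
    have hIlim : Filter.Tendsto I Filter.atTop (nhds 0) := by
      have h0ae : ∀ᵐ (x : ℝ), x ≠ (0:ℝ) := by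
        rw [MeasureTheory.ae_iff]
        simp only [not_not]
        rw [show {x : ℝ | x = 0} = {(0:ℝ)} by ext x; simp]
        exact Real.volume_singleton
      have := MeasureTheory.tendsto_integral_of_dominated_convergence (μ := volume)
        (F := fun n x => (Set.Iio (δf n)).indicator (ρ ε) x) (f := fun _ => (0:ℝ))
        (bound := ρ ε)
        (fun n => (hρc.aestronglyMeasurable).indicator measurableSet_Iio)
        hρint
        (fun n => by
          filter_upwards with x
          by_cases h : x ∈ Set.Iio (δf n)
          · rw [Set.indicator_of_mem h]
            rw [Real.norm_eq_abs, abs_of_nonneg (hρ0 x)]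
          · rw [Set.indicator_of_notMem h]
            simpa using hρ0 x)
        (by
          filter_upwards [h0ae] with x hx
          rcases lt_or_gt_of_ne hx with hneg | hpos
          · have hzero : ∀ n, (Set.Iio (δf n)).indicator (ρ ε) x = 0 := by
              intro n
              by_cases h : x ∈ Set.Iio (δf n)
              · rw [Set.indicator_of_mem h]
                apply hsupp
                simp only [Set.mem_Icc, not_and_or, not_le]
                left; exact hneg
              · exact Set.indicator_of_notMem h _
            rw [show (fun n => (Set.Iio (δf n)).indicator (ρ ε) x) = fun _ => (0:ℝ) from
              funext hzero]
            exact tendsto_const_nhds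
          · have hδ0 : Filter.Tendsto δf Filter.atTop (nhds 0) := by
              rw [hδf]
              exact tendsto_one_div_add_atTop_nhds_zero_nat
            have hev : ∀ᶠ n in Filter.atTop, δf n < x :=
              hδ0.eventually (eventually_lt_nhds hpos)
            apply Filter.Tendsto.congr' _ (tendsto_const_nhds (x := (0:ℝ)))
            filter_upwards [hev] with n hn
            rw [Set.indicator_of_notMem (by simp [not_lt.mpr hn.le])])
      simpa using this
    have hrhs : Filter.Tendsto (fun n => dp + (K' - dp) * I n) Filter.atTop
        (nhds (dp + (K' - dp) * 0)) :=
      tendsto_const_nhds.add (tendsto_const_nhds.mul hIlim)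
    have := le_of_tendsto hrhs (Filter.Eventually.of_forall hstep1)
    simpa using this
  -- now prove the Tendsto
  rw [show (nhds dp) = nhds dp from rfl]
  refine tendsto_order.2 ⟨?_, ?_⟩
  · intro c hc
    filter_upwards [self_mem_nhdsWithin] with ε hε
    exact lt_of_lt_of_le hc (hlow ε hε)
  · intro c hc
    -- choose y > e with slope f e y < (dp+c)/2
    have hslopelim : Filter.Tendsto (slope f e) (nhdsWithin e (Set.Ioi e)) (nhds dp) := by
      have := hasDerivWithinAt_iff_tendsto_slope.mp hdp
      rwa [show Set.Ioi e \ {e} = Set.Ioi e by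
        apply Set.diff_singleton_eq_self; simp] at this
    have hev : ∀ᶠ y in nhdsWithin e (Set.Ioi e), slope f e y < (dp + c) / 2 :=
      hslopelim.eventually (eventually_lt_nhds (by linarith))
    obtain ⟨y, hsy, hy⟩ := (hev.and self_mem_nhdsWithin).exists
    have hy : e < y := hy
    set d : ℝ := y - e with hd
    have hdpos : 0 < d := by simp [hd]; linarith
    set C : ℝ := max 0 (slope f y (y + d)) with hC
    have hC0 : 0 ≤ C := le_max_left _ _
    set B : ℝ := (C + |dp|) / d with hB
    have hB0 : 0 ≤ B := by
      apply div_nonneg _ (le_of_lt hdpos)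
      positivity
    set ε₀ : ℝ := min d (((c - dp) / 2) / (B + 1)) with hε₀
    have hε₀pos : 0 < ε₀ := by
      apply lt_min hdpos
      apply div_pos (by linarith) (by linarith)
    filter_upwards [Ioo_mem_nhdsGT_of_mem (Set.mem_Ico.mpr ⟨le_refl (0:ℝ), hε₀pos⟩)]
      with ε hεIoo
    obtain ⟨hε, hεlt⟩ := hεIoo
    have hεd : ε ≤ d := le_trans hεlt.le (min_le_left _ _)
    obtain ⟨hsm, hρ0, hsupp, hρ1⟩ := hρ ε hε
    have hρc : Continuous (ρ ε) := hsm.continuous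
    set F : ℝ → ℝ := fun u => ∫ x, f (u + x) * ρ ε x with hF
    have hI : ∀ u : ℝ, Integrable (fun x => f (u + x) * ρ ε x) := fun u =>
      molly_integrable _ _ (hf.comp (continuous_const.add continuous_id)) hρc hsupp
    have hρint : Integrable (ρ ε) := by
      have := molly_integrable (fun _ => (1:ℝ)) (ρ ε) continuous_const hρc hsupp
      simpa using this
    obtain ⟨D, hD⟩ := molly_hasDeriv f hf (ρ ε) hsm hsupp e
    have hDval : deriv F e = D := hD.deriv
    rw [hDval]
    have hFconv : ConvexOn ℝ Set.univ F := molly_convex f (ρ ε) hconv hf hρc hρ0 hsupp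
    -- D ≤ slope F e y
    have hDslope : D ≤ slope F e y :=
      hFconv.le_slope_of_hasDerivAt (Set.mem_univ _) (Set.mem_univ _) hy hD
    -- F y ≤ f y + ε * C
    have hFy : F y ≤ f y + ε * C := by
      have hpt : ∀ x : ℝ, f (y + x) * ρ ε x ≤ (f y + ε * C) * ρ ε x := by
        intro x
        by_cases hx : x ∈ Set.Icc 0 ε
        · obtain ⟨hx0, hxε⟩ := hx
          rcases eq_or_lt_of_le hx0 with h | hx0
          · rw [← h]
            simp only [add_zero]
            apply mul_le_mul_of_nonneg_right _ (hρ0 0)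
            nlinarith [hC0, hε]
          · have hsl : slope f y (y + x) ≤ C := by
              have h1 : slope f y (y + x) ≤ slope f y (y + d) :=
                molly_slope_mono_right hconv (by linarith) (by linarith) (by linarith)
              have h2 : slope f y (y + d) ≤ C := le_max_right _ _
              linarith
            have hfy : f (y + x) ≤ f y + ε * C := by
              rw [slope_def_field] at hsl
              have hd2 : y + x - y = x := by ring
              rw [hd2, div_le_iff₀ hx0] at hsl
              nlinarith [hC0]
            exact mul_le_mul_of_nonneg_right hfy (hρ0 x)
        · rw [hsupp x hx]; simp
      have := integral_mono (hI y) (hρint.const_mul (f y + ε * C)) hpt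
      rwa [MeasureTheory.integral_const_mul, hρ1, mul_one] at this
    -- f e - |dp| * ε ≤ F e
    have hFe : f e - |dp| * ε ≤ F e := by
      have hpt : ∀ x : ℝ, (f e - |dp| * ε) * ρ ε x ≤ f (e + x) * ρ ε x := by
        intro x
        by_cases hx : x ∈ Set.Icc 0 ε
        · obtain ⟨hx0, hxε⟩ := hx
          apply mul_le_mul_of_nonneg_right _ (hρ0 x)
          have h1 := molly_supp_line hconv hdp hx0
          have h2 : -(|dp| * ε) ≤ dp * x := by
            have : |dp * x| ≤ |dp| * ε := by
              rw [abs_mul]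
              apply mul_le_mul_of_nonneg_left _ (abs_nonneg dp)
              rw [abs_of_nonneg hx0]; exact hxε
            linarith [neg_abs_le (dp * x)]
          linarith
        · rw [hsupp x hx]; simp
      have := integral_mono (hρint.const_mul (f e - |dp| * ε)) (hI e) hpt
      rwa [MeasureTheory.integral_const_mul, hρ1, mul_one] at this
    -- combine
    have hslopeF : slope F e y ≤ slope f e y + ε * B := by
      rw [slope_def_field, slope_def_field, ← hd]
      have h2 : (f y + ε * C - (f e - |dp| * ε)) / d = (f y - f e) / d + ε * ((C + |dp|) / d) := by
        ring
      calc (F y - F e) / d ≤ (f y + ε * C - (f e - |dp| * ε)) / d := by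
            gcongr
          _ = (f y - f e) / d + ε * B := by rw [h2, hB]
    have hεB : ε * B < (c - dp) / 2 := by
      have hε2 : ε < ((c - dp) / 2) / (B + 1) := lt_of_lt_of_le hεlt (min_le_right _ _)
      have h3 : ε * (B + 1) < (((c - dp) / 2) / (B + 1)) * (B + 1) :=
        mul_lt_mul_of_pos_right hε2 (by linarith)
      rw [div_mul_cancel₀ _ (by linarith : B + 1 ≠ 0)] at h3
      nlinarith [hε]
    have : slope f e y < (dp + c) / 2 := hsy
    linarith [hDslope, hslopeF]
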